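/- arXiv:2112.12924 — 5 statements merged into one kernel-verified Lean document; each statement's English description precedes it below -/
import Mathlib

section
/- Let τ : D → (0,∞) be continuous and define d_τ(z,w) = inf over piecewise smooth curves γ from z to w in D of ∫₀¹ |γ'(t)|/τ(γ(t)) dt. Suppose there exist constants C > 1 and M > 0 such that e^{-d_τ(z,w)} ≤ C (min(τ(z),τ(w))/|z-w|)^M for all z ≠ w in D. Then for every R > 0 there is a constant C₁ > 0 (depending only on C, M, R and the constant δ from the Lipschitz property of τ) such that whenever d_τ(z,w) < R, one has d_τ(z,w) ≥ C₁ |z-w| / min(τ(z), τ(w)). -/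
/-!
A curve from `z` to `w` must leave the ball of radius `min ‖z - w‖ (τ z)` about `z`, and inside
that ball the Lipschitz bound gives `τ ≤ (1 + c₂) τ z`; so `d_τ(z, w) ≥ min (‖z - w‖ / τ z) 1 / (1 + c₂)`,
and since `τ z ≤ min (τ z) (τ w) + c₂ ‖z - w‖` this becomes
`d_τ(z, w) ≥ min (‖z - w‖ / m) 1 / (1 + c₂)²` with `m = min (τ z) (τ w)`.
When `d_τ(z, w) < R`, the estimate on `exp (-d_τ)` bounds `‖z - w‖ / m` by `K = (C e^R)^(1/M)`,
and on `[0, K]` the ratio `u / max K 1` is below `min u 1`.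
-/

open Complex MeasureTheory

/-- The weighted path (pseudo)distance on the unit disk with metric density `1/τ`,
defined as the infimum of `∫₀¹ |γ'(t)|/τ(γ(t)) dt` over smooth curves in the disk
joining `z` to `w`. -/
noncomputable def pathDist (τ : ℂ → ℝ) (z w : ℂ) : ℝ :=
  sInf {L : ℝ | ∃ γ : ℝ → ℂ, γ 0 = z ∧ γ 1 = w ∧
    (∀ t ∈ Set.Icc (0:ℝ) 1, ‖γ t‖ < 1) ∧
    ContDiffOn ℝ 1 γ (Set.Icc (0:ℝ) 1) ∧
    L = ∫ t in (0:ℝ)..1, ‖deriv γ t‖ / τ (γ t)}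

open Set

lemma ContinuousOn.exists_first_le {φ : ℝ → ℝ} {a b r : ℝ} (hab : a ≤ b)
    (hφ : ContinuousOn φ (Icc a b)) (hr : r ≤ φ b) :
    ∃ T ∈ Icc a b, r ≤ φ T ∧ ∀ t ∈ Ico a T, φ t < r := by
  set S := Icc a b ∩ φ ⁻¹' Ici r
  have hS : IsCompact S := isCompact_Icc.of_isClosed_subset
    (hφ.preimage_isClosed_of_isClosed isClosed_Icc isClosed_Ici) inter_subset_left
  obtain ⟨T, ⟨hT, hrT⟩, hleast⟩ := hS.exists_isLeast ⟨b, ⟨right_mem_Icc.2 hab, hr⟩⟩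
  refine ⟨T, hT, hrT, fun t ht => lt_of_not_ge fun hrt => ?_⟩
  exact (hleast ⟨⟨ht.1, ht.2.le.trans hT.2⟩, hrt⟩).not_gt ht.2

section Curves

variable {E : Type*} [NormedAddCommGroup E] [NormedSpace ℝ E] {γ : ℝ → E}

lemma ContDiffOn.intervalIntegrable_norm_deriv {a b : ℝ} (hab : a < b)
    (hγ : ContDiffOn ℝ 1 γ (Icc a b)) :
    IntervalIntegrable (fun t => ‖deriv γ t‖) volume a b := by
  have hcont : ContinuousOn (fun t => ‖derivWithin γ (Icc a b) t‖) (Icc a b) :=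
    (hγ.continuousOn_derivWithin (uniqueDiffOn_Icc hab) le_rfl).norm
  refine (hcont.intervalIntegrable_of_Icc hab.le).congr_uIoo fun t ht => ?_
  rw [uIoo_of_le hab.le] at ht
  simp only [derivWithin_of_mem_nhds (Icc_mem_nhds ht.1 ht.2)]

lemma div_le_integral_norm_deriv_div {ρ : E → ℝ} {r B : ℝ}
    (hγ : ContDiffOn ℝ 1 γ (Icc 0 1)) (hρ : ContinuousOn (fun t => ρ (γ t)) (Icc 0 1))
    (hρpos : ∀ t ∈ Icc (0 : ℝ) 1, 0 < ρ (γ t)) (hB0 : 0 < B) (hr : r ≤ ‖γ 1 - γ 0‖)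
    (hB : ∀ t ∈ Icc (0 : ℝ) 1, ‖γ t - γ 0‖ < r → ρ (γ t) ≤ B) :
    r / B ≤ ∫ t in (0 : ℝ)..1, ‖deriv γ t‖ / ρ (γ t) := by
  obtain ⟨T, hT, hrT, hinside⟩ := ContinuousOn.exists_first_le zero_le_one
    (hγ.continuousOn.sub continuousOn_const).norm hr
  have hT1 : Icc 0 T ⊆ Icc (0 : ℝ) 1 := Icc_subset_Icc le_rfl hT.2
  have hspeed := hγ.intervalIntegrable_norm_deriv zero_lt_one
  have hspeedT : IntervalIntegrable (fun t => ‖deriv γ t‖) volume 0 T :=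
    hspeed.mono_set (by rwa [uIcc_of_le hT.1, uIcc_of_le zero_le_one])
  have hweighted : IntervalIntegrable (fun t => ‖deriv γ t‖ / ρ (γ t)) volume 0 1 := by
    simp_rw [div_eq_mul_inv]
    exact hspeed.mul_continuousOn (by
      rw [uIcc_of_le zero_le_one]
      exact hρ.inv₀ fun t ht => (hρpos t ht).ne')
  have hlength : r ≤ ∫ t in (0 : ℝ)..T, ‖deriv γ t‖ :=
    hrT.trans <| norm_sub_le_integral_of_norm_deriv_le_of_le hT.1 (hγ.continuousOn.mono hT1)
      ((hγ.differentiableOn one_ne_zero).mono (Ioo_subset_Icc_self.trans hT1))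
      (ae_of_all _ fun _ _ => le_rfl) hspeedT
  calc r / B ≤ (∫ t in (0 : ℝ)..T, ‖deriv γ t‖) / B := by gcongr
    _ = ∫ t in (0 : ℝ)..T, ‖deriv γ t‖ / B := (intervalIntegral.integral_div _ _).symm
    _ ≤ ∫ t in (0 : ℝ)..T, ‖deriv γ t‖ / ρ (γ t) := by
      refine intervalIntegral.integral_mono_on_of_le_Ioo hT.1 (hspeedT.div_const B)
        (hweighted.mono_set (by rwa [uIcc_of_le hT.1, uIcc_of_le zero_le_one])) fun t ht => ?_
      have ht1 : t ∈ Icc (0 : ℝ) 1 := hT1 (Ioo_subset_Icc_self ht)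
      exact div_le_div_of_nonneg_left (norm_nonneg _) (hρpos t ht1)
        (hB t ht1 (hinside t ⟨ht.1.le, ht.2⟩))
    _ ≤ ∫ t in (0 : ℝ)..1, ‖deriv γ t‖ / ρ (γ t) :=
      intervalIntegral.integral_mono_interval le_rfl hT.1 hT.2
        ((ae_restrict_iff' measurableSet_Ioc).2 <| ae_of_all _ fun t ht =>
          div_nonneg (norm_nonneg _) (hρpos t (Ioc_subset_Icc_self ht)).le) hweighted

end Curves

lemma pathDist_set_nonempty (τ : ℂ → ℝ) {z w : ℂ} (hz : ‖z‖ < 1) (hw : ‖w‖ < 1) :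
    {L : ℝ | ∃ γ : ℝ → ℂ, γ 0 = z ∧ γ 1 = w ∧
      (∀ t ∈ Set.Icc (0:ℝ) 1, ‖γ t‖ < 1) ∧
      ContDiffOn ℝ 1 γ (Set.Icc (0:ℝ) 1) ∧
      L = ∫ t in (0:ℝ)..1, ‖deriv γ t‖ / τ (γ t)}.Nonempty := by
  refine ⟨_, fun t : ℝ => z + t • (w - z), by simp, by simp, fun t ht => ?_, by fun_prop, rfl⟩
  exact mem_ball_zero_iff.1 <| (convex_ball (0 : ℂ) 1).add_smul_sub_mem
    (mem_ball_zero_iff.2 hz) (mem_ball_zero_iff.2 hw) ht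

lemma le_pathDist {τ : ℂ → ℝ} {z w : ℂ} {b : ℝ} (hz : ‖z‖ < 1) (hw : ‖w‖ < 1)
    (h : ∀ γ : ℝ → ℂ, γ 0 = z → γ 1 = w → (∀ t ∈ Icc (0 : ℝ) 1, ‖γ t‖ < 1) →
      ContDiffOn ℝ 1 γ (Icc 0 1) → b ≤ ∫ t in (0 : ℝ)..1, ‖deriv γ t‖ / τ (γ t)) :
    b ≤ pathDist τ z w := by
  refine le_csInf (pathDist_set_nonempty τ hz hw) ?_
  rintro _ ⟨γ, h0, h1, hmem, hγ, rfl⟩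
  exact h γ h0 h1 hmem hγ

lemma min_div_le_pathDist {τ : ℂ → ℝ} {c : ℝ} (hc : 0 ≤ c)
    (hpos : ∀ z : ℂ, ‖z‖ < 1 → 0 < τ z)
    (hlip : ∀ z w : ℂ, ‖z‖ < 1 → ‖w‖ < 1 → |τ z - τ w| ≤ c * ‖z - w‖)
    {z w : ℂ} (hz : ‖z‖ < 1) (hw : ‖w‖ < 1) :
    min ‖z - w‖ (τ z) / ((1 + c) * τ z) ≤ pathDist τ z w := by
  have hτ : ContinuousOn τ (Metric.ball 0 1) := by
    refine (LipschitzOnWith.of_dist_le_mul (K := c.toNNReal) fun a ha b hb => ?_).continuousOn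
    rw [Real.dist_eq, Complex.dist_eq, Real.coe_toNNReal c hc]
    exact hlip a b (mem_ball_zero_iff.1 ha) (mem_ball_zero_iff.1 hb)
  refine le_pathDist hz hw fun γ h0 h1 hmem hγ => ?_
  subst h0 h1
  refine div_le_integral_norm_deriv_div hγ
    (hτ.comp hγ.continuousOn fun t ht => mem_ball_zero_iff.2 (hmem t ht))
    (fun t ht => hpos _ (hmem t ht)) (by have := hpos _ hz; positivity)
    (by rw [norm_sub_rev]; exact min_le_left _ _) fun t ht hnear => ?_
  have hnear' : ‖γ t - γ 0‖ ≤ τ (γ 0) := hnear.le.trans (min_le_right _ _)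
  have hτγ := (abs_le.1 (hlip (γ t) (γ 0) (hmem t ht) hz)).2
  linarith [mul_le_mul_of_nonneg_left hnear' hc]

lemma min_div_sq_le_min_div {x t m c : ℝ} (hc : 0 ≤ c) (hx : 0 ≤ x) (hm : 0 < m)
    (hmt : m ≤ t) (ht : t ≤ m + c * x) :
    min (x / m) 1 / (1 + c) ^ 2 ≤ min x t / ((1 + c) * t) := by
  have ht0 : 0 < t := hm.trans_le hmt
  rcases le_or_gt x m with hxm | hmx
  · rw [min_eq_left ((div_le_one hm).2 hxm), min_eq_left (hxm.trans hmt), div_div]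
    refine div_le_div_of_nonneg_left hx (by positivity) ?_
    nlinarith [mul_le_mul_of_nonneg_left hxm hc]
  · rw [min_eq_right ((one_le_div hm).2 hmx.le), div_le_div_iff₀ (by positivity) (by positivity)]
    have hct : t ≤ (1 + c) * min x t := by
      rw [mul_min_of_nonneg _ _ (by linarith)]
      exact le_min (by linarith) (by nlinarith)
    nlinarith [mul_le_mul_of_nonneg_left hct (by linarith : (0 : ℝ) ≤ 1 + c)]

lemma min_div_min_le_pathDist {τ : ℂ → ℝ} {c : ℝ} (hc : 0 ≤ c)
    (hpos : ∀ z : ℂ, ‖z‖ < 1 → 0 < τ z)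
    (hlip : ∀ z w : ℂ, ‖z‖ < 1 → ‖w‖ < 1 → |τ z - τ w| ≤ c * ‖z - w‖)
    {z w : ℂ} (hz : ‖z‖ < 1) (hw : ‖w‖ < 1) :
    min (‖z - w‖ / min (τ z) (τ w)) 1 / (1 + c) ^ 2 ≤ pathDist τ z w := by
  refine (min_div_sq_le_min_div hc (norm_nonneg _) (lt_min (hpos z hz) (hpos w hw))
    (min_le_left _ _) ?_).trans (min_div_le_pathDist hc hpos hlip hz hw)
  rw [← min_add_add_right]
  have hτzw := (abs_le.1 (hlip z w hz hw)).2
  exact le_min (le_add_of_nonneg_right (by positivity)) (by linarith)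

lemma inv_le_rpow_inv_of_exp_neg_le {d R C M y : ℝ} (hC : 0 < C) (hM : 0 < M) (hy : 0 < y)
    (hd : d < R) (h : Real.exp (-d) ≤ C * y ^ M) :
    y⁻¹ ≤ (C * Real.exp R) ^ M⁻¹ := by
  rw [Real.le_rpow_inv_iff_of_pos (by positivity) (by positivity) hM,
    Real.inv_rpow hy.le]
  refine inv_le_of_inv_le₀ (by positivity) (le_of_mul_le_mul_left ?_ hC)
  calc C * (C * Real.exp R)⁻¹ = Real.exp (-R) := by
        rw [Real.exp_neg]; field_simp
    _ ≤ Real.exp (-d) := Real.exp_le_exp.2 (by linarith)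
    _ ≤ C * y ^ M := h

lemma div_max_one_le_min_one {u K : ℝ} (hu : 0 ≤ u) (huK : u ≤ K) : u / max K 1 ≤ min u 1 :=
  le_min (div_le_self hu (le_max_right _ _))
    ((div_le_one (by positivity)).2 (huK.trans (le_max_left _ _)))

theorem stmt1_general (τ : ℂ → ℝ) (c₂ : ℝ) (hc₂ : 0 < c₂)
    (hpos : ∀ z : ℂ, ‖z‖ < 1 → 0 < τ z)
    (hlip : ∀ z w : ℂ, ‖z‖ < 1 → ‖w‖ < 1 →
      |τ z - τ w| ≤ c₂ * ‖z - w‖)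
    (C M : ℝ) (hC : 1 < C) (hM : 0 < M)
    (hest : ∀ z w : ℂ, ‖z‖ < 1 → ‖w‖ < 1 → z ≠ w →
      Real.exp (-(pathDist τ z w)) ≤
        C * (min (τ z) (τ w) / ‖z - w‖) ^ M) :
    ∀ R : ℝ, 0 < R → ∃ C₁ : ℝ, 0 < C₁ ∧
      ∀ z w : ℂ, ‖z‖ < 1 → ‖w‖ < 1 →
        pathDist τ z w < R →
        pathDist τ z w ≥ C₁ * ‖z - w‖ / min (τ z) (τ w) := by
  intro R _
  set K := (C * Real.exp R) ^ M⁻¹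
  refine ⟨1 / ((1 + c₂) ^ 2 * max K 1), by positivity, fun z w hz hw hd => ?_⟩
  have hm : 0 < min (τ z) (τ w) := lt_min (hpos z hz) (hpos w hw)
  have hratio : ‖z - w‖ / min (τ z) (τ w) ≤ K := by
    rcases eq_or_ne z w with rfl | hzw
    · simp only [sub_self, norm_zero, zero_div]; positivity
    simpa only [inv_div] using inv_le_rpow_inv_of_exp_neg_le (by linarith) hM
      (div_pos hm (norm_pos_iff.2 (sub_ne_zero.2 hzw))) hd (hest z w hz hw hzw)
  calc 1 / ((1 + c₂) ^ 2 * max K 1) * ‖z - w‖ / min (τ z) (τ w)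
      = ‖z - w‖ / min (τ z) (τ w) / max K 1 / (1 + c₂) ^ 2 := by
        rw [one_div, mul_inv]; ring
    _ ≤ min (‖z - w‖ / min (τ z) (τ w)) 1 / (1 + c₂) ^ 2 := by
      gcongr
      exact div_max_one_le_min_one (by positivity) hratio
    _ ≤ pathDist τ z w := min_div_min_le_pathDist hc₂.le hpos hlip hz hw

theorem stmt1 (τ : ℂ → ℝ) (c₁ c₂ : ℝ) (hc₁ : 0 < c₁) (hc₂ : 0 < c₂)
    (hpos : ∀ z : ℂ, ‖z‖ < 1 → 0 < τ z)
    (hbound : ∀ z : ℂ, ‖z‖ < 1 → τ z ≤ c₁ * (1 - ‖z‖))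
    (hlip : ∀ z w : ℂ, ‖z‖ < 1 → ‖w‖ < 1 →
      |τ z - τ w| ≤ c₂ * ‖z - w‖)
    (C M : ℝ) (hC : 1 < C) (hM : 0 < M)
    (hest : ∀ z w : ℂ, ‖z‖ < 1 → ‖w‖ < 1 → z ≠ w →
      Real.exp (-(pathDist τ z w)) ≤
        C * (min (τ z) (τ w) / ‖z - w‖) ^ M) :
    ∀ R : ℝ, 0 < R → ∃ C₁ : ℝ, 0 < C₁ ∧
      ∀ z w : ℂ, ‖z‖ < 1 → ‖w‖ < 1 →
        pathDist τ z w < R →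
        pathDist τ z w ≥ C₁ * ‖z - w‖ / min (τ z) (τ w) :=
  stmt1_general τ c₂ hc₂ hpos hlip C M hC hM hest
end

section
/- Let H be a reproducing kernel Hilbert space on X with kernel K, and let z, w ∈ X with K_z ≠ 0. Define M(z,w) = sup{|f(z)| : f ∈ H, ‖f‖ = 1, f(w) = 0} and S(z,w) = (1 - |K(z,w)|/(‖K_z‖‖K_w‖))^{1/2}. Then S(z,w) ≤ M(z,w)/√(K(z,z)) ≤ √2 · S(z,w). -/
/-!
The unit vectors vanishing at `w` are the unit vectors of `(ℂ ∙ K w)ᗮ`, so `M(z, w)` is the norm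
of the projection of `K z` onto that complement, and Pythagoras gives
`M² = ‖K z‖² - |⟪K w, K z⟫|² / ‖K w‖²`. With `t = |⟪K w, K z⟫| / (‖K z‖ ‖K w‖) ∈ [0, 1]` this reads
`M / ‖K z‖ = √(1 - t²)`, and `1 - t ≤ 1 - t² ≤ 2 (1 - t)`.
-/

open scoped InnerProductSpace

section

variable {𝕜 E : Type*} [RCLike 𝕜] [NormedAddCommGroup E] [InnerProductSpace 𝕜 E]

theorem Submodule.sSup_norm_inner_unit_eq_norm_starProjection (U : Submodule 𝕜 E)
    [U.HasOrthogonalProjection] (x : E) :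
    sSup {r : ℝ | ∃ f ∈ U, ‖f‖ = 1 ∧ r = ‖⟪x, f⟫_𝕜‖} = ‖U.starProjection x‖ := by
  set p := U.starProjection x
  have inner_eq {f : E} (hf : f ∈ U) : ⟪x, f⟫_𝕜 = ⟪p, f⟫_𝕜 := by
    rw [U.inner_starProjection_left_eq_right, U.starProjection_eq_self_iff.mpr hf]
  have bound : ∀ r ∈ {r : ℝ | ∃ f ∈ U, ‖f‖ = 1 ∧ r = ‖⟪x, f⟫_𝕜‖}, r ≤ ‖p‖ := by
    rintro r ⟨f, hfU, hf1, rfl⟩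
    simpa [inner_eq hfU, hf1] using norm_inner_le_norm (𝕜 := 𝕜) p f
  refine le_antisymm (Real.sSup_le bound (norm_nonneg _)) ?_
  rcases eq_or_ne p 0 with hp | hp
  · rw [hp, norm_zero]
    exact Real.sSup_nonneg fun r ⟨f, _, _, hr⟩ ↦ hr ▸ norm_nonneg _
  · have hmem : (‖p‖⁻¹ : 𝕜) • p ∈ U := U.smul_mem _ (U.starProjection_apply_mem x)
    refine le_csSup ⟨‖p‖, bound⟩ ⟨(‖p‖⁻¹ : 𝕜) • p, hmem, ?_, ?_⟩
    · simp [norm_smul, hp]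
    · rw [inner_eq hmem, inner_smul_right, inner_self_eq_norm_sq_to_K]
      simp only [norm_mul, norm_inv, norm_algebraMap', norm_norm, norm_pow]
      field_simp

theorem norm_sq_starProjection_orthogonal_singleton (x y : E) :
    ‖(𝕜 ∙ y)ᗮ.starProjection x‖ ^ 2 = ‖x‖ ^ 2 - (‖⟪y, x⟫_𝕜‖ / ‖y‖) ^ 2 := by
  have hproj : ‖(𝕜 ∙ y).starProjection x‖ = ‖⟪y, x⟫_𝕜‖ / ‖y‖ := by
    rcases eq_or_ne y 0 with rfl | hy
    · simp [Submodule.span_zero_singleton 𝕜]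
    rw [Submodule.starProjection_singleton, norm_smul, norm_div, RCLike.norm_ofReal,
      abs_of_nonneg (by positivity)]
    field_simp
  rw [(𝕜 ∙ y).norm_sq_eq_add_norm_sq_starProjection x, hproj]
  ring

theorem sSup_norm_inner_unit_orthogonal_div_norm (x y : E) (hx : x ≠ 0) :
    sSup {r : ℝ | ∃ f : E, ‖f‖ = 1 ∧ ⟪y, f⟫_𝕜 = 0 ∧ r = ‖⟪x, f⟫_𝕜‖} / ‖x‖ =
      √(1 - (‖⟪y, x⟫_𝕜‖ / (‖x‖ * ‖y‖)) ^ 2) := by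
  have hset : {r : ℝ | ∃ f : E, ‖f‖ = 1 ∧ ⟪y, f⟫_𝕜 = 0 ∧ r = ‖⟪x, f⟫_𝕜‖} =
      {r : ℝ | ∃ f ∈ (𝕜 ∙ y)ᗮ, ‖f‖ = 1 ∧ r = ‖⟪x, f⟫_𝕜‖} := by
    simp only [Submodule.mem_orthogonal_singleton_iff_inner_right, and_left_comm]
  have hxn : 0 < ‖x‖ := norm_pos_iff.mpr hx
  rw [hset, Submodule.sSup_norm_inner_unit_eq_norm_starProjection,
    ← Real.sqrt_sq (div_nonneg (norm_nonneg _) hxn.le), div_pow,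
    norm_sq_starProjection_orthogonal_singleton]
  congr 1
  field_simp

end

theorem Real.sqrt_one_sub_le_sqrt_one_sub_sq {t : ℝ} (h0 : 0 ≤ t) (h1 : t ≤ 1) :
    √(1 - t) ≤ √(1 - t ^ 2) :=
  Real.sqrt_le_sqrt (by nlinarith)

theorem Real.sqrt_one_sub_sq_le_sqrt_two_mul_sqrt_one_sub (t : ℝ) :
    √(1 - t ^ 2) ≤ √2 * √(1 - t) := by
  rw [← Real.sqrt_mul zero_le_two]
  exact Real.sqrt_le_sqrt (by nlinarith [sq_nonneg (1 - t)])

theorem stmt5_general {X : Type*} {H : Type*} [NormedAddCommGroup H] [InnerProductSpace ℂ H]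
    -- `H` is realized as a reproducing kernel Hilbert space of functions on `X`
    -- via the evaluation pairing `f(z) = ⟪K z, f⟫`.
    (ev : H → X → ℂ) (K : X → H)
    (hrepro : ∀ (f : H) (z : X), ev f z = ⟪K z, f⟫_ℂ)
    (z w : X) (hz : K z ≠ 0) :
    Real.sqrt (1 - ‖(⟪K w, K z⟫_ℂ)‖ / (‖K z‖ * ‖K w‖)) ≤
      sSup {r : ℝ | ∃ f : H, ‖f‖ = 1 ∧ ev f w = 0 ∧ r = ‖ev f z‖} / ‖K z‖ ∧
    sSup {r : ℝ | ∃ f : H, ‖f‖ = 1 ∧ ev f w = 0 ∧ r = ‖ev f z‖} / ‖K z‖ ≤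
      Real.sqrt 2 * Real.sqrt (1 - ‖(⟪K w, K z⟫_ℂ)‖ / (‖K z‖ * ‖K w‖)) := by
  simp_rw [hrepro]
  rw [sSup_norm_inner_unit_orthogonal_div_norm _ _ hz]
  set t := ‖⟪K w, K z⟫_ℂ‖ / (‖K z‖ * ‖K w‖)
  have ht1 : t ≤ 1 :=
    div_le_one_of_le₀ (by rw [mul_comm]; exact norm_inner_le_norm _ _) (by positivity)
  exact ⟨Real.sqrt_one_sub_le_sqrt_one_sub_sq (by positivity) ht1,
    Real.sqrt_one_sub_sq_le_sqrt_two_mul_sqrt_one_sub t⟩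

theorem stmt5 {X : Type*} {H : Type*} [NormedAddCommGroup H] [InnerProductSpace ℂ H]
    [CompleteSpace H]
    -- `H` is realized as a reproducing kernel Hilbert space of functions on `X`
    -- via the evaluation pairing `f(z) = ⟪K z, f⟫`.
    (ev : H → X → ℂ) (K : X → H)
    (hrepro : ∀ (f : H) (z : X), ev f z = ⟪K z, f⟫_ℂ)
    (z w : X) (hz : K z ≠ 0) (hw : K w ≠ 0) :
    Real.sqrt (1 - ‖(⟪K w, K z⟫_ℂ)‖ / (‖K z‖ * ‖K w‖)) ≤
      sSup {r : ℝ | ∃ f : H, ‖f‖ = 1 ∧ ev f w = 0 ∧ r = ‖ev f z‖} / ‖K z‖ ∧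
    sSup {r : ℝ | ∃ f : H, ‖f‖ = 1 ∧ ev f w = 0 ∧ r = ‖ev f z‖} / ‖K z‖ ≤
      Real.sqrt 2 * Real.sqrt (1 - ‖(⟪K w, K z⟫_ℂ)‖ / (‖K z‖ * ‖K w‖)) :=
  stmt5_general ev K hrepro z w hz
end

section
/- Let τ : D → (0,∞) satisfy the standing assumptions (Lipschitz with small constant, τ(z) ≲ 1-|z|) and suppose the distance comparison d_τ(z,w) ≥ C₁|z-w|/min(τ(z),τ(w)) holds whenever d_τ(z,w) < R. For z, w ∈ D and s ∈ [0,1] let z_s = (1-s)z + s w. Then there is a constant C > 0 independent of s, t, z, w such that ρ_τ(z_s, z_t) ≤ C ρ_τ(z,w) for all s, t ∈ [0,1], where ρ_τ = 1 - e^{-d_τ}. -/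
/-!
If `d_τ(z, w)` is small, the comparison hypothesis makes `|z - w|` small relative to
`min (τ z) (τ w)`, so by the Lipschitz bound `τ ≥ min (τ z) (τ w) / 2` on the whole segment
`[z, w]`. Integrating `1/τ` along the straight segment `[z_s, z_t] ⊆ [z, w]` then gives
`d_τ(z_s, z_t) ≤ 2 |z - w| / min (τ z) (τ w) ≤ (2 / C₁) d_τ(z, w)`, and `1 - e^{-x} ≤ x` together
with `x ≤ e^r (1 - e^{-x})` for `x ≤ r` transfers this to `ρ_τ`. If `d_τ(z, w)` is not small,
`ρ_τ(z, w)` is bounded below while `ρ_τ ≤ 1`.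
-/

open Complex MeasureTheory

namespace Real

theorem one_sub_exp_neg_le_mul_of_lt_imp_le {x y r K : ℝ} (hr : 0 < r) (hK : 0 ≤ K)
    (hy : 0 ≤ y) (h : y < r → x ≤ K * y) :
    1 - exp (-x) ≤ max (K * exp r) (1 - exp (-r))⁻¹ * (1 - exp (-y)) := by
  have hρy : 0 ≤ 1 - exp (-y) := sub_nonneg.2 (exp_le_one_iff.2 (neg_nonpos.2 hy))
  have hρr : 0 < 1 - exp (-r) := sub_pos.2 (exp_lt_one_iff.2 (neg_neg_of_pos hr))
  rcases lt_or_ge y r with hyr | hyr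
  · have hey : exp y * (1 - exp (-y)) = exp y - 1 := by
      rw [mul_sub, ← exp_add, add_neg_cancel, exp_zero, mul_one]
    calc 1 - exp (-x) ≤ x := by linarith [add_one_le_exp (-x)]
      _ ≤ K * y := h hyr
      _ ≤ K * (exp y * (1 - exp (-y))) := by
          rw [hey]; gcongr; linarith [add_one_le_exp y]
      _ ≤ K * exp r * (1 - exp (-y)) := by
          rw [mul_assoc]; gcongr
      _ ≤ _ := by gcongr; exact le_max_left _ _
  · calc 1 - exp (-x) ≤ 1 := by linarith [exp_pos (-x)]
      _ = (1 - exp (-r))⁻¹ * (1 - exp (-r)) := (inv_mul_cancel₀ hρr.ne').symm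
      _ ≤ _ := by gcongr; exact le_max_right _ _

end Real

theorem norm_sub_le_of_mem_segment_of_mem_segment {E : Type*} [NormedAddCommGroup E]
    [NormedSpace ℝ E] {z w a b : E} (ha : a ∈ segment ℝ z w) (hb : b ∈ segment ℝ z w) :
    ‖b - a‖ ≤ ‖w - z‖ := by
  have hz : z ∈ Metric.closedBall a ‖w - z‖ := by
    rw [mem_closedBall_iff_norm, norm_sub_rev]; exact norm_sub_le_of_mem_segment ha
  have hw : w ∈ Metric.closedBall a ‖w - z‖ := by
    rw [mem_closedBall_iff_norm, norm_sub_rev, norm_sub_rev w]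
    exact norm_sub_le_of_mem_segment (segment_symm ℝ z w ▸ ha)
  exact mem_closedBall_iff_norm.1 ((convex_closedBall a _).segment_subset hz hw hb)

section pathDist

variable {τ : ℂ → ℝ}

theorem pathDist_nonneg (hpos : ∀ z : ℂ, ‖z‖ < 1 → 0 < τ z) (z w : ℂ) :
    0 ≤ pathDist τ z w := by
  refine Real.sInf_nonneg ?_
  rintro L ⟨γ, -, -, hγ, -, rfl⟩
  refine intervalIntegral.integral_nonneg zero_le_one fun t ht => ?_
  exact div_nonneg (norm_nonneg _) (hpos _ (hγ t ht)).le

theorem pathDist_le_of_le_on_segment (hpos : ∀ z : ℂ, ‖z‖ < 1 → 0 < τ z) {a b : ℂ}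
    (ha : ‖a‖ < 1) (hb : ‖b‖ < 1) {m : ℝ} (hm : 0 < m)
    (hτ : ∀ p ∈ segment ℝ a b, m ≤ τ p) :
    pathDist τ a b ≤ ‖b - a‖ / m := by
  have hseg : ∀ t ∈ Set.Icc (0:ℝ) 1, AffineMap.lineMap a b t ∈ segment ℝ a b :=
    fun t ht => lineMap_mem_segment ℝ a b ht
  have hdisk : segment ℝ a b ⊆ Metric.ball 0 1 :=
    (convex_ball 0 1).segment_subset (mem_ball_zero_iff.2 ha) (mem_ball_zero_iff.2 hb)
  have hlen : pathDist τ a b ≤ ∫ t in (0:ℝ)..1, ‖b - a‖ / τ (AffineMap.lineMap a b t) := by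
    refine csInf_le ⟨0, ?_⟩ ⟨AffineMap.lineMap a b, by simp, by simp,
      fun t ht => mem_ball_zero_iff.1 (hdisk (hseg t ht)),
      (AffineMap.contDiff_lineMap a b).contDiffOn, by simp [AffineMap.hasDerivAt_lineMap.deriv]⟩
    rintro L ⟨γ, -, -, hγ, -, rfl⟩
    refine intervalIntegral.integral_nonneg zero_le_one fun t ht => ?_
    exact div_nonneg (norm_nonneg _) (hpos _ (hγ t ht)).le
  have hbound : ∀ t ∈ Set.uIoc (0:ℝ) 1, ‖‖b - a‖ / τ (AffineMap.lineMap a b t)‖ ≤ ‖b - a‖ / m := by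
    intro t ht
    have ht' : t ∈ Set.Icc (0:ℝ) 1 := by
      rw [Set.uIoc_of_le zero_le_one] at ht; exact Set.Ioc_subset_Icc_self ht
    have hτt := hτ _ (hseg t ht')
    rw [Real.norm_of_nonneg (div_nonneg (norm_nonneg _) (hm.trans_le hτt).le)]
    gcongr
  calc pathDist τ a b ≤ _ := hlen
    _ ≤ _ := Real.le_norm_self _
    _ ≤ ‖b - a‖ / m := by
      simpa using intervalIntegral.norm_integral_le_of_norm_le_const hbound

theorem pathDist_le_of_mem_segment (hpos : ∀ z : ℂ, ‖z‖ < 1 → 0 < τ z) {c₂ : ℝ} (hc₂ : 0 ≤ c₂)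
    (hlip : ∀ z w : ℂ, ‖z‖ < 1 → ‖w‖ < 1 → |τ z - τ w| ≤ c₂ * ‖z - w‖)
    {z w a b : ℂ} (hz : ‖z‖ < 1) (hw : ‖w‖ < 1)
    (hsmall : 2 * c₂ * ‖z - w‖ ≤ min (τ z) (τ w))
    (ha : a ∈ segment ℝ z w) (hb : b ∈ segment ℝ z w) :
    pathDist τ a b ≤ 2 * ‖z - w‖ / min (τ z) (τ w) := by
  set M := min (τ z) (τ w)
  have hM : 0 < M := lt_min (hpos z hz) (hpos w hw)
  have hdisk : ∀ p ∈ segment ℝ z w, ‖p‖ < 1 := fun p hp => mem_ball_zero_iff.1 <|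
    (convex_ball 0 1).segment_subset (mem_ball_zero_iff.2 hz) (mem_ball_zero_iff.2 hw) hp
  have hτ : ∀ p ∈ segment ℝ z w, M / 2 ≤ τ p := by
    intro p hp
    have hzp : c₂ * ‖z - p‖ ≤ c₂ * ‖z - w‖ := by
      rw [norm_sub_rev z p, norm_sub_rev z w]; gcongr; exact norm_sub_le_of_mem_segment hp
    have := (abs_le.1 (hlip z p hz (hdisk p hp))).2
    linarith [min_le_left (τ z) (τ w)]
  calc pathDist τ a b ≤ ‖b - a‖ / (M / 2) :=
        pathDist_le_of_le_on_segment hpos (hdisk a ha) (hdisk b hb) (by positivity)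
          fun p hp => hτ p ((convex_segment z w).segment_subset ha hb hp)
    _ ≤ ‖w - z‖ / (M / 2) := by gcongr; exact norm_sub_le_of_mem_segment_of_mem_segment ha hb
    _ = 2 * ‖z - w‖ / M := by rw [norm_sub_rev]; field_simp

end pathDist

theorem stmt7_general (τ : ℂ → ℝ) (c₂ : ℝ) (hc₂ : 0 < c₂)
    (hpos : ∀ z : ℂ, ‖z‖ < 1 → 0 < τ z)
    (hlip : ∀ z w : ℂ, ‖z‖ < 1 → ‖w‖ < 1 →
      |τ z - τ w| ≤ c₂ * ‖z - w‖)
    (R C₁ : ℝ) (hR : 0 < R) (hC₁ : 0 < C₁)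
    -- the distance comparison `d_τ(z,w) ≥ C₁|z-w|/min(τ(z),τ(w))` for `d_τ(z,w) < R`:
    (hcomp : ∀ z w : ℂ, ‖z‖ < 1 → ‖w‖ < 1 →
      pathDist τ z w < R →
      pathDist τ z w ≥ C₁ * ‖z - w‖ / min (τ z) (τ w)) :
    ∃ C : ℝ, 0 < C ∧ ∀ z w : ℂ, ‖z‖ < 1 → ‖w‖ < 1 →
      ∀ s t : ℝ, s ∈ Set.Icc (0:ℝ) 1 → t ∈ Set.Icc (0:ℝ) 1 →
        1 - Real.exp (-(pathDist τ ((1-s) • z + s • w) ((1-t) • z + t • w))) ≤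
          C * (1 - Real.exp (-(pathDist τ z w))) := by
  set r := min R (C₁ / (2 * c₂))
  have hr : 0 < r := lt_min hR (by positivity)
  refine ⟨max (2 / C₁ * Real.exp r) (1 - Real.exp (-r))⁻¹, lt_max_of_lt_left (by positivity),
    fun z w hz hw s t hs ht => ?_⟩
  refine Real.one_sub_exp_neg_le_mul_of_lt_imp_le hr (by positivity) (pathDist_nonneg hpos z w)
    fun hd => ?_
  set M := min (τ z) (τ w)
  have hM : 0 < M := lt_min (hpos z hz) (hpos w hw)
  have hA : C₁ * ‖z - w‖ / M ≤ pathDist τ z w := hcomp z w hz hw (hd.trans_le (min_le_left _ _))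
  have hsmall : 2 * c₂ * ‖z - w‖ ≤ M := by
    have h := (hA.trans_lt (hd.trans_le (min_le_right _ _)))
    rw [div_lt_div_iff₀ hM (by positivity)] at h
    nlinarith
  have hseg : ∀ u ∈ Set.Icc (0:ℝ) 1, (1 - u) • z + u • w ∈ segment ℝ z w :=
    fun u hu => ⟨1 - u, u, sub_nonneg.2 hu.2, hu.1, sub_add_cancel 1 u, rfl⟩
  calc _ ≤ 2 * ‖z - w‖ / M :=
        pathDist_le_of_mem_segment hpos hc₂.le hlip hz hw hsmall (hseg s hs) (hseg t ht)
    _ = 2 / C₁ * (C₁ * ‖z - w‖ / M) := by field_simp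
    _ ≤ 2 / C₁ * pathDist τ z w := by gcongr

theorem stmt7 (τ : ℂ → ℝ) (c₁ c₂ : ℝ) (hc₁ : 0 < c₁) (hc₂ : 0 < c₂)
    (hpos : ∀ z : ℂ, ‖z‖ < 1 → 0 < τ z)
    (hbound : ∀ z : ℂ, ‖z‖ < 1 → τ z ≤ c₁ * (1 - ‖z‖))
    (hlip : ∀ z w : ℂ, ‖z‖ < 1 → ‖w‖ < 1 →
      |τ z - τ w| ≤ c₂ * ‖z - w‖)
    (R C₁ : ℝ) (hR : 0 < R) (hC₁ : 0 < C₁)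
    -- the distance comparison `d_τ(z,w) ≥ C₁|z-w|/min(τ(z),τ(w))` for `d_τ(z,w) < R`:
    (hcomp : ∀ z w : ℂ, ‖z‖ < 1 → ‖w‖ < 1 →
      pathDist τ z w < R →
      pathDist τ z w ≥ C₁ * ‖z - w‖ / min (τ z) (τ w)) :
    ∃ C : ℝ, 0 < C ∧ ∀ z w : ℂ, ‖z‖ < 1 → ‖w‖ < 1 →
      ∀ s t : ℝ, s ∈ Set.Icc (0:ℝ) 1 → t ∈ Set.Icc (0:ℝ) 1 →
        1 - Real.exp (-(pathDist τ ((1-s) • z + s • w) ((1-t) • z + t • w))) ≤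
          C * (1 - Real.exp (-(pathDist τ z w))) :=
  stmt7_general τ c₂ hc₂ hpos hlip R C₁ hR hC₁ hcomp
end

section
/- Let φ(z) = (1+z²)/2 and ψ(z) = φ(z) + ε(1-z²)⁵ with 0 < ε < 2⁻⁷. Then ψ(z) = φ(z) + 32ε(1-φ(z))⁵, and |ψ(z)| ≤ |φ(z)| + 32ε(1-|φ(z)|²)² ≤ 1 for all z in the closed unit disk; in particular ψ maps the open unit disk into itself. -/
open Complex

/-! The identity is `1 - φ z = (1 - z²)/2`. For the estimate put `u = φ z`, `a = ‖1 - u‖`,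
`b = ‖u‖`: since `2u - 1 = z²` lies in the closed disk, `u` lies in the disk with diameter
`[0, 1]`, i.e. `a² + b² ≤ 1`. Hence `a⁵ ≤ a⁴ ≤ (1 - b²)²`, and for `32ε ≤ 1/4` the elementary
bound `b + 32ε(1 - b²)² ≤ 1` on `[0, 1]` finishes, strictly when `b < 1`. -/

theorem norm_sub_sq_add_norm_sq_le_of_norm_sub_two_nsmul_le {E : Type*} [NormedAddCommGroup E]
    [InnerProductSpace ℝ E] {a u : E} (hu : ‖a - 2 • u‖ ≤ ‖a‖) :
    ‖a - u‖ ^ 2 + ‖u‖ ^ 2 ≤ ‖a‖ ^ 2 := by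
  have parallelogram := parallelogram_law_with_norm ℝ (a - u) u
  rw [sub_add_cancel, sub_sub, ← two_nsmul] at parallelogram
  nlinarith [norm_nonneg (a - 2 • u), norm_nonneg a]

theorem norm_one_add_sq_div_two_lt_one {z : ℂ} (hz : ‖z‖ < 1) : ‖(1 + z ^ 2) / 2‖ < 1 := by
  have hz2 : ‖z ^ 2‖ < 1 := by
    rw [norm_pow]
    exact pow_lt_one₀ (norm_nonneg z) hz two_ne_zero
  have htri : ‖1 + z ^ 2‖ ≤ 1 + ‖z ^ 2‖ := (norm_add_le _ _).trans_eq (by rw [norm_one])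
  rw [norm_div, Complex.norm_two]
  linarith

theorem norm_add_mul_one_sub_pow_five_le {u : ℂ} {c : ℝ} (hc : 0 ≤ c)
    (hu : ‖1 - u‖ ^ 2 + ‖u‖ ^ 2 ≤ 1) :
    ‖u + c * (1 - u) ^ 5‖ ≤ ‖u‖ + c * (1 - ‖u‖ ^ 2) ^ 2 := by
  set a := ‖1 - u‖
  have ha0 : 0 ≤ a := norm_nonneg _
  have ha1 : a ≤ 1 := by nlinarith [sq_nonneg ‖u‖]
  have ha5 : a ^ 5 ≤ (1 - ‖u‖ ^ 2) ^ 2 :=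
    calc a ^ 5 ≤ (a ^ 2) ^ 2 := by
          rw [← pow_mul]
          exact pow_le_pow_of_le_one ha0 ha1 (by norm_num)
      _ ≤ (1 - ‖u‖ ^ 2) ^ 2 := pow_le_pow_left₀ (sq_nonneg a) (by linarith) 2
  calc ‖u + c * (1 - u) ^ 5‖ ≤ ‖u‖ + c * a ^ 5 := by
        refine (norm_add_le _ _).trans_eq ?_
        rw [norm_mul, norm_pow, Complex.norm_real, Real.norm_of_nonneg hc]
    _ ≤ ‖u‖ + c * (1 - ‖u‖ ^ 2) ^ 2 := by gcongr

-- On `[0, 1)`: `c (1 - b²)² ≤ (1 + b)² (1 - b)² / 4 < 1 - b`.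
theorem add_mul_one_sub_sq_sq_lt_one {b c : ℝ} (hb0 : 0 ≤ b) (hb1 : b < 1) (hc : c ≤ 1 / 4) :
    b + c * (1 - b ^ 2) ^ 2 < 1 := by
  have hc' : c * (1 - b ^ 2) ^ 2 ≤ (1 - b ^ 2) ^ 2 / 4 := by nlinarith [sq_nonneg (1 - b ^ 2)]
  nlinarith [mul_pos (sub_pos.2 hb1) (sub_pos.2 hb1), mul_nonneg hb0 (sq_nonneg (1 - b)),
    mul_nonneg (mul_nonneg hb0 hb0) (sq_nonneg (1 - b))]

theorem add_mul_one_sub_sq_sq_le_one {b c : ℝ} (hb0 : 0 ≤ b) (hb1 : b ≤ 1) (hc : c ≤ 1 / 4) :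
    b + c * (1 - b ^ 2) ^ 2 ≤ 1 := by
  rcases hb1.lt_or_eq with hb1 | rfl
  · exact (add_mul_one_sub_sq_sq_lt_one hb0 hb1 hc).le
  · norm_num

theorem stmt10 (ε : ℝ) (hε0 : 0 < ε) (hε : ε < 2⁻¹ ^ 7)
    (φ ψ : ℂ → ℂ)
    (hφ : ∀ z : ℂ, φ z = (1 + z ^ 2) / 2)
    (hψ : ∀ z : ℂ, ψ z = φ z + (ε : ℂ) * (1 - z ^ 2) ^ 5) :
    (∀ z : ℂ, ψ z = φ z + 32 * (ε : ℂ) * (1 - φ z) ^ 5) ∧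
    (∀ z : ℂ, ‖z‖ ≤ 1 →
      ‖ψ z‖ ≤ ‖φ z‖ + 32 * ε * (1 - ‖φ z‖ ^ 2) ^ 2 ∧
      ‖φ z‖ + 32 * ε * (1 - ‖φ z‖ ^ 2) ^ 2 ≤ 1) ∧
    (∀ z : ℂ, ‖z‖ < 1 → ‖ψ z‖ < 1) := by
  have hc : 32 * ε ≤ 1 / 4 := by norm_num at hε; linarith
  have hψφ (z : ℂ) : ψ z = φ z + 32 * (ε : ℂ) * (1 - φ z) ^ 5 := by rw [hψ, hφ]; ring
  have hdisk (z : ℂ) (hz : ‖z‖ ≤ 1) : ‖1 - φ z‖ ^ 2 + ‖φ z‖ ^ 2 ≤ 1 := by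
    have h := norm_sub_sq_add_norm_sq_le_of_norm_sub_two_nsmul_le (a := 1) (u := φ z)
    rw [norm_one, one_pow] at h
    refine h ?_
    rw [hφ, nsmul_eq_mul, Nat.cast_two, mul_div_cancel₀ _ two_ne_zero, sub_add_cancel_left,
      norm_neg, norm_pow]
    exact pow_le_one₀ (norm_nonneg z) hz
  have hbound (z : ℂ) (hz : ‖z‖ ≤ 1) : ‖ψ z‖ ≤ ‖φ z‖ + 32 * ε * (1 - ‖φ z‖ ^ 2) ^ 2 := by
    rw [hψφ]
    exact_mod_cast norm_add_mul_one_sub_pow_five_le (by positivity) (hdisk z hz)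
  refine ⟨hψφ, fun z hz => ⟨hbound z hz, ?_⟩, fun z hz => ?_⟩
  · refine add_mul_one_sub_sq_sq_le_one (norm_nonneg _) ?_ hc
    nlinarith [hdisk z hz, sq_nonneg ‖1 - φ z‖, norm_nonneg (φ z)]
  · refine (hbound z hz.le).trans_lt (add_mul_one_sub_sq_sq_lt_one (norm_nonneg _) ?_ hc)
    rw [hφ]
    exact norm_one_add_sq_div_two_lt_one hz
end

section
/- Let φ(z) = (1+z²)/2 and ψ(z) = φ(z) + ε(1-z²)⁵ with 0 < ε < 2⁻⁷. Then for all z ∈ D, (|ψ(z)| - |z|)/((1-|z|)(1-|ψ(z)|)) ≤ 11(1-|z|)/(1-|ψ(z)|). -/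
/-! With w = z², the perturbation has size ε‖1 - w‖⁵, and the parallelogram law gives
‖1 - w‖² ≤ 4(1 - ‖φ z‖²); as ε < 2⁻⁷ this is at most (1 - ‖φ z‖)², so
‖ψ z‖ - ‖z‖ ≤ (‖φ z‖ - ‖z‖) + (1 - ‖φ z‖)². Since ‖φ z‖ lies between (1 - ‖z‖²)/2 and
(1 + ‖z‖²)/2, the right-hand side is at most 2(1 - ‖z‖)². -/

lemma norm_add_sq_add_norm_sub_sq_le {E : Type*} [NormedAddCommGroup E] [InnerProductSpace ℝ E]
    {x y : E} (h : ‖y‖ ≤ ‖x‖) : ‖x + y‖ ^ 2 + ‖x - y‖ ^ 2 ≤ 4 * ‖x‖ ^ 2 := by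
  rw [parallelogram_law_with_norm ℝ x y]
  nlinarith [norm_nonneg y]

lemma mul_pow_five_le_sq_of_sq_le {ε a f : ℝ} (hε : ε ≤ 2⁻¹ ^ 7) (ha : 0 ≤ a)
    (hf : 0 ≤ f) (haf : a ^ 2 ≤ 4 * (1 - f ^ 2)) : ε * a ^ 5 ≤ (1 - f) ^ 2 := by
  have hf1 : f ≤ 1 := by nlinarith
  have ha2 : a ≤ 2 := by nlinarith
  have hdefect : 1 - f ^ 2 ≤ 2 * (1 - f) := by nlinarith
  calc ε * a ^ 5 ≤ 2⁻¹ ^ 7 * a * (a ^ 2) ^ 2 := by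
        rw [mul_assoc, ← pow_mul, ← pow_succ']
        exact mul_le_mul_of_nonneg_right hε (by positivity)
    _ ≤ 2⁻¹ ^ 7 * 2 * (4 * (2 * (1 - f))) ^ 2 := by
        gcongr
        exact haf.trans (by linarith)
    _ = (1 - f) ^ 2 := by ring

lemma sub_add_one_sub_sq_le {r f : ℝ} (hr0 : 0 ≤ r) (hr1 : r ≤ 1) (hlo : (1 - r ^ 2) / 2 ≤ f)
    (hhi : f ≤ (1 + r ^ 2) / 2) : f - r + (1 - f) ^ 2 ≤ 2 * (1 - r) ^ 2 := by
  nlinarith [mul_nonneg (sub_nonneg.2 hlo) (sub_nonneg.2 hhi), mul_nonneg hr0 (sq_nonneg (1 - r)),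
    mul_nonneg hr0 hr0]

lemma div_mul_le_mul_div_of_le_mul_sq {x b c k : ℝ} (hb : 0 < b) (hc : 0 ≤ c) (h : x ≤ k * b ^ 2) :
    x / (b * c) ≤ k * b / c := by
  rcases hc.eq_or_lt with rfl | hc
  · simp
  calc x / (b * c) ≤ k * b ^ 2 / (b * c) := by gcongr
    _ = k * b / c := by field_simp

lemma norm_one_add_div_two_mem_Icc (w : ℂ) :
    ‖(1 + w) / 2‖ ∈ Set.Icc ((1 - ‖w‖) / 2) ((1 + ‖w‖) / 2) := by
  rw [norm_div, Complex.norm_two]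
  constructor
  · gcongr
    simpa using norm_sub_le_norm_add (1 : ℂ) w
  · gcongr
    simpa using norm_add_le (1 : ℂ) w

lemma norm_one_sub_sq_le (w : ℂ) (hw : ‖w‖ ≤ 1) :
    ‖1 - w‖ ^ 2 ≤ 4 * (1 - ‖(1 + w) / 2‖ ^ 2) := by
  have := norm_add_sq_add_norm_sub_sq_le (x := (1 : ℂ)) (y := w) (by simpa using hw)
  rw [norm_div, Complex.norm_two, norm_one] at *
  linarith

lemma norm_add_ofReal_mul_one_sub_pow_five_le {ε : ℝ} (hε0 : 0 ≤ ε) (hε : ε ≤ 2⁻¹ ^ 7) {w : ℂ}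
    (hw : ‖w‖ ≤ 1) :
    ‖(1 + w) / 2 + ε * (1 - w) ^ 5‖ ≤ ‖(1 + w) / 2‖ + (1 - ‖(1 + w) / 2‖) ^ 2 :=
  calc ‖(1 + w) / 2 + ε * (1 - w) ^ 5‖ ≤ ‖(1 + w) / 2‖ + ε * ‖1 - w‖ ^ 5 := by
        refine (norm_add_le _ _).trans_eq ?_
        rw [norm_mul, norm_pow, Complex.norm_of_nonneg hε0]
    _ ≤ ‖(1 + w) / 2‖ + (1 - ‖(1 + w) / 2‖) ^ 2 := by
        gcongr
        exact mul_pow_five_le_sq_of_sq_le hε (norm_nonneg _) (norm_nonneg _)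
          (norm_one_sub_sq_le w hw)

theorem stmt14 (ε : ℝ) (hε0 : 0 < ε) (hε : ε < 2⁻¹ ^ 7)
    (φ ψ : ℂ → ℂ)
    (hφ : ∀ z : ℂ, φ z = (1 + z ^ 2) / 2)
    (hψ : ∀ z : ℂ, ψ z = φ z + (ε : ℂ) * (1 - z ^ 2) ^ 5) :
    ∀ z : ℂ, ‖z‖ < 1 →
      (‖ψ z‖ - ‖z‖) /
          ((1 - ‖z‖) * (1 - ‖ψ z‖)) ≤
        11 * (1 - ‖z‖) / (1 - ‖ψ z‖) := by
  intro z hz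
  have hz2 : ‖z ^ 2‖ = ‖z‖ ^ 2 := norm_pow z 2
  have hψz := norm_add_ofReal_mul_one_sub_pow_five_le hε0.le hε.le (w := z ^ 2)
    (by rw [hz2]; nlinarith [norm_nonneg z])
  rw [← hφ, ← hψ] at hψz
  obtain ⟨hφ_lo, hφ_hi⟩ := norm_one_add_div_two_mem_Icc (z ^ 2)
  rw [hz2, ← hφ] at hφ_lo hφ_hi
  have hψ_sub : ‖ψ z‖ - ‖z‖ ≤ 11 * (1 - ‖z‖) ^ 2 :=
    calc ‖ψ z‖ - ‖z‖ ≤ ‖φ z‖ - ‖z‖ + (1 - ‖φ z‖) ^ 2 := by linarith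
      _ ≤ 2 * (1 - ‖z‖) ^ 2 := sub_add_one_sub_sq_le (norm_nonneg z) hz.le hφ_lo hφ_hi
      _ ≤ 11 * (1 - ‖z‖) ^ 2 := by gcongr; norm_num
  refine div_mul_le_mul_div_of_le_mul_sq (by linarith) ?_ hψ_sub
  have hφ1 : ‖φ z‖ ≤ 1 := by nlinarith [norm_nonneg z]
  nlinarith [mul_nonneg (norm_nonneg (φ z)) (sub_nonneg.2 hφ1)]
end
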